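/- Let N and M be metric spaces, α: N → M a uniform embedding, T_M a total order on M, and T_N a pullback of T_M along α. If for some k ≥ 1 the ordered space (N,T_N) admits a sequence of snakes of bounded width on k+1 points, then (M,T_M) also admits such a sequence of snakes, and OR_{M,T_M}(k) = k. -/

import Mathlib

open scoped Classical

/-- Length of the path visiting the points of a list in order,
for a distance function `d`. -/
noncomputable def pathLen {α : Type*} (d : α → α → ℝ) : List α → ℝ
  | [] => 0
  | [_] => 0
  | a :: b :: l => d a b + pathLen d (b :: l)

/-- `lopt d X` : minimal length of a path visiting all points of the finite set `X`. -/
noncomputable def lopt {α : Type*} (d : α → α → ℝ) (X : Finset α) : ℝ :=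
  sInf {r : ℝ | ∃ l : List α, l.Nodup ∧ l.toFinset = X ∧ pathLen d l = r}

/-- `lord d T X` : length of the path visiting all points of `X` in the order `T`. -/
noncomputable def lord {α : Type*} (d : α → α → ℝ) (T : LinearOrder α) (X : Finset α) : ℝ :=
  sInf {r : ℝ | ∃ l : List α, l.Nodup ∧ l.toFinset = X ∧ List.Pairwise T.lt l ∧ pathLen d l = r}

/-- The order ratio function `OR_{M,T}(k)`. -/
noncomputable def ORd {α : Type*} (d : α → α → ℝ) (T : LinearOrder α) (k : ℕ) : ℝ :=
  sSup {r : ℝ | ∃ X : Finset α, 2 ≤ X.card ∧ X.card ≤ k + 1 ∧ r = lord d T X / lopt d X}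

/-- A snake in an ordered space: a tuple of points strictly increasing with respect to `T`. -/
def IsSnake {α : Type*} (T : LinearOrder α) {n : ℕ} (x : Fin n → α) : Prop :=
  ∀ i j : Fin n, i < j → T.lt (x i) (x j)

/-- Diameter of a snake. -/
noncomputable def snakeDiam {α : Type*} (d : α → α → ℝ) {n : ℕ} (x : Fin n → α) : ℝ :=
  sSup {r : ℝ | ∃ i j : Fin n, r = d (x i) (x j)}

/-- Width of a snake: maximal distance between points whose indices have the same parity. -/
noncomputable def snakeWidth {α : Type*} (d : α → α → ℝ) {n : ℕ} (x : Fin n → α) : ℝ :=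
  sSup {r : ℝ | ∃ i j : Fin n, i.val % 2 = j.val % 2 ∧ r = d (x i) (x j)}

/-- A sequence of snakes on `s` points of uniformly bounded width whose diameters
tend to infinity. -/
def SnakeSeqBddWidth {α : Type*} (d : α → α → ℝ) (T : LinearOrder α) (s : ℕ) : Prop :=
  ∃ (x : ℕ → Fin s → α) (W : ℝ),
    (∀ n, IsSnake T (x n)) ∧ (∀ n, snakeWidth d (x n) ≤ W) ∧
    Filter.Tendsto (fun n => snakeDiam d (x n)) Filter.atTop Filter.atTop

/-- A uniform (coarse) embedding. -/
def UnifEmb {N : Type*} {M : Type*} [MetricSpace N] [MetricSpace M] (α : N → M) : Prop :=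
  ∃ ρ1 ρ2 : ℝ → ℝ, Monotone ρ1 ∧ Monotone ρ2 ∧
    Filter.Tendsto ρ1 Filter.atTop Filter.atTop ∧
    ∀ x y : N, ρ1 (dist x y) ≤ dist (α x) (α y) ∧ dist (α x) (α y) ≤ ρ2 (dist x y)

/-!
Every step of an ordered tour through at most `k + 1` points is bounded by their diameter, hence
by the length of any tour through them, so `OR(k) ≤ k`. Conversely, in a snake of width `W` and
diameter `D` any two points of opposite parity are at distance at least `D - 2W`, so the ordered
tour has length at least `k (D - 2W)`, while visiting first the even-indexed and then the
odd-indexed points costs at most `D + (k + 1) W`; letting `D → ∞` gives `OR(k) ≥ k`.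

Snakes are carried along the uniform embedding: widths stay below `ρ₂ W`, diameters grow like
`ρ₁ D`, and once `ρ₁ (D - 2W) > 0` consecutive image points are distinct, so the pullback
condition forces the image tuples to be strictly increasing.
-/

open Filter Topology

section PathLength

variable {α : Type*}

lemma pathLen_ofFn (d : α → α → ℝ) {m : ℕ} (f : Fin (m + 1) → α) :
    pathLen d (List.ofFn f) = ∑ i : Fin m, d (f i.castSucc) (f i.succ) := by
  induction m with
  | zero => simp [pathLen]
  | succ m ih =>
    have htail : List.ofFn (fun i : Fin (m + 1) => f i.succ)
        = f 1 :: List.ofFn (fun i : Fin m => f i.succ.succ) := List.ofFn_succ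
    rw [List.ofFn_succ, htail]
    change d (f 0) (f 1) + pathLen d (f 1 :: _) = _
    rw [← htail, ih (fun i => f i.succ), Fin.sum_univ_succ]
    rfl

lemma pathLen_le_of_forall_le (d : α → α → ℝ) (c : ℝ) :
    ∀ l : List α, (∀ a ∈ l, ∀ b ∈ l, d a b ≤ c) → pathLen d l ≤ (l.length - 1 : ℕ) * c
  | [] => by simp [pathLen]
  | [_] => by simp [pathLen]
  | a :: b :: l => by
      intro h
      have ih := pathLen_le_of_forall_le d c (b :: l) fun x hx y hy =>
        h x (List.mem_cons_of_mem a hx) y (List.mem_cons_of_mem a hy)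
      have hab : d a b ≤ c := h a (by simp) b (by simp)
      simp only [pathLen, List.length_cons, Nat.add_sub_cancel] at ih ⊢
      push_cast at ih ⊢
      linarith

lemma pathLen_append_le (d : α → α → ℝ) {c : ℝ} (hc : 0 ≤ c) :
    ∀ l₁ l₂ : List α, (∀ a ∈ l₁, ∀ b ∈ l₂, d a b ≤ c) →
      pathLen d (l₁ ++ l₂) ≤ pathLen d l₁ + c + pathLen d l₂
  | [], _, _ => by simp [pathLen, hc]
  | [_], [], _ => by simp [pathLen, hc]
  | [a], b :: l, h => by
      have := h a (by simp) b (by simp)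
      simp only [List.cons_append, List.nil_append, pathLen]
      linarith
  | a :: b :: l₁, l₂, h => by
      have ih := pathLen_append_le d hc (b :: l₁) l₂ fun x hx y hy =>
        h x (List.mem_cons_of_mem a hx) y hy
      simp only [List.cons_append, pathLen] at ih ⊢
      linarith

variable [MetricSpace α]

lemma pathLen_nonneg : ∀ l : List α, 0 ≤ pathLen dist l
  | [] => le_rfl
  | [_] => le_rfl
  | _ :: b :: l => add_nonneg dist_nonneg (pathLen_nonneg (b :: l))

lemma pathLen_le_pathLen_cons (a : α) : ∀ l : List α, pathLen dist l ≤ pathLen dist (a :: l)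
  | [] => le_rfl
  | _ :: _ => le_add_of_nonneg_left dist_nonneg

lemma dist_le_pathLen_cons (a : α) : ∀ l : List α, ∀ b ∈ l, dist a b ≤ pathLen dist (a :: l)
  | [] => by simp
  | c :: l => by
      intro b hb
      rcases List.mem_cons.mp hb with rfl | hb
      · exact le_add_of_nonneg_right (pathLen_nonneg _)
      · calc dist a b ≤ dist a c + dist c b := dist_triangle a c b
          _ ≤ dist a c + pathLen dist (c :: l) := by gcongr; exact dist_le_pathLen_cons c l b hb

lemma dist_le_pathLen : ∀ l : List α, ∀ a ∈ l, ∀ b ∈ l, dist a b ≤ pathLen dist l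
  | [] => by simp
  | c :: l => by
      intro a ha b hb
      rcases List.mem_cons.mp ha with rfl | ha'
      · rcases List.mem_cons.mp hb with rfl | hb'
        · simp [pathLen_nonneg]
        · exact dist_le_pathLen_cons a l b hb'
      rcases List.mem_cons.mp hb with rfl | hb'
      · exact dist_comm a b ▸ dist_le_pathLen_cons b l a ha'
      · exact (dist_le_pathLen l a ha' b hb').trans (pathLen_le_pathLen_cons c l)

end PathLength

section OrderRatio

variable {α : Type*} [MetricSpace α]

lemma lord_eq_pathLen (T : LinearOrder α) {l : List α} (hl : l.Pairwise T.lt) :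
    lord dist T l.toFinset = pathLen dist l := by
  let _ := T
  have hnd : l.Nodup := hl.imp ne_of_lt
  have hsorted : {r : ℝ | ∃ l' : List α, l'.Nodup ∧ l'.toFinset = l.toFinset ∧
      l'.Pairwise T.lt ∧ pathLen dist l' = r} = {pathLen dist l} := by
    ext r
    constructor
    · rintro ⟨l', -, hl'X, hl', rfl⟩
      have hsub : ∀ {l₁ l₂ : List α}, l₁.toFinset = l₂.toFinset → l₁ ⊆ l₂ := fun h a ha =>
        List.mem_toFinset.1 (h ▸ List.mem_toFinset.2 ha)
      rw [List.Subset.antisymm_of_sortedLT (hsub hl'X) (hsub hl'X.symm) hl'.sortedLT hl.sortedLT]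
      rfl
    · rintro rfl
      exact ⟨l, hnd, rfl, hl, rfl⟩
  rw [lord, hsorted, csInf_singleton]

lemma lopt_le_pathLen {l : List α} (hl : l.Nodup) : lopt dist l.toFinset ≤ pathLen dist l :=
  csInf_le ⟨0, by rintro r ⟨l', -, -, rfl⟩; exact pathLen_nonneg l'⟩ ⟨l, hl, rfl, rfl⟩

lemma lopt_nonneg (X : Finset α) : 0 ≤ lopt dist X :=
  Real.sInf_nonneg (by rintro r ⟨l, -, -, rfl⟩; exact pathLen_nonneg l)

lemma lord_nonneg (T : LinearOrder α) (X : Finset α) : 0 ≤ lord dist T X :=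
  Real.sInf_nonneg (by rintro r ⟨l, -, -, -, rfl⟩; exact pathLen_nonneg l)

lemma dist_le_lopt {X : Finset α} {a b : α} (ha : a ∈ X) (hb : b ∈ X) :
    dist a b ≤ lopt dist X := by
  refine le_csInf ⟨_, X.toList, X.nodup_toList, X.toList_toFinset, rfl⟩ ?_
  rintro r ⟨l, -, rfl, rfl⟩
  exact dist_le_pathLen l a (List.mem_toFinset.1 ha) b (List.mem_toFinset.1 hb)

lemma lopt_pos {X : Finset α} (hX : 2 ≤ X.card) : 0 < lopt dist X := by
  obtain ⟨a, ha, b, hb, hab⟩ := Finset.one_lt_card.mp hX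
  exact (dist_pos.2 hab).trans_le (dist_le_lopt ha hb)

lemma lord_le_mul_lopt (T : LinearOrder α) {X : Finset α} {k : ℕ} (hX : X.card ≤ k + 1) :
    lord dist T X ≤ k * lopt dist X := by
  let _ := T
  set L := X.sort (· ≤ ·)
  have hLX : L.toFinset = X := by ext; simp [L]
  have hstep : ((L.length - 1 : ℕ) : ℝ) ≤ k := by
    rw [X.length_sort]; exact_mod_cast Nat.sub_le_of_le_add hX
  calc lord dist T X = pathLen dist L := hLX ▸ lord_eq_pathLen T X.sortedLT_sort.pairwise
    _ ≤ (L.length - 1 : ℕ) * lopt dist X :=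
        pathLen_le_of_forall_le _ _ L fun a ha b hb =>
          dist_le_lopt (hLX ▸ List.mem_toFinset.2 ha) (hLX ▸ List.mem_toFinset.2 hb)
    _ ≤ k * lopt dist X := by gcongr; exact lopt_nonneg X

lemma ORd_le (T : LinearOrder α) (k : ℕ) : ORd dist T k ≤ k := by
  refine Real.sSup_le ?_ k.cast_nonneg
  rintro r ⟨X, -, hX, rfl⟩
  exact div_le_of_le_mul₀ (lopt_nonneg X) k.cast_nonneg (lord_le_mul_lopt T hX)

lemma ORd_nonneg (T : LinearOrder α) (k : ℕ) : 0 ≤ ORd dist T k :=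
  Real.sSup_nonneg fun _ ⟨X, _, _, hr⟩ => hr ▸ div_nonneg (lord_nonneg T X) (lopt_nonneg X)

lemma div_le_ORd (T : LinearOrder α) {k : ℕ} {X : Finset α} (hX₂ : 2 ≤ X.card)
    (hX : X.card ≤ k + 1) : lord dist T X / lopt dist X ≤ ORd dist T k := by
  refine le_csSup ⟨k, ?_⟩ ⟨X, hX₂, hX, rfl⟩
  rintro r ⟨Y, -, hY, rfl⟩
  exact div_le_of_le_mul₀ (lopt_nonneg Y) k.cast_nonneg (lord_le_mul_lopt T hY)

end OrderRatio

lemma IsSnake.injective {α : Type*} {T : LinearOrder α} {s : ℕ} {y : Fin s → α}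
    (hy : IsSnake T y) : Function.Injective y :=
  let _ := T
  StrictMono.injective fun _ _ hij => hy _ _ hij

section Snakes

variable {α : Type*} [MetricSpace α]

/-- Visit the points of one cluster, jump once, then visit the other cluster. -/
lemma lopt_le_of_two_clusters (X : Finset α) (p : α → Prop) {W D : ℝ} (hW₀ : 0 ≤ W)
    (hD₀ : 0 ≤ D) (hW : ∀ a ∈ X, ∀ b ∈ X, (p a ↔ p b) → dist a b ≤ W)
    (hD : ∀ a ∈ X, ∀ b ∈ X, dist a b ≤ D) :
    lopt dist X ≤ D + X.card * W := by
  set A := X.toList.filter (fun a => decide (p a))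
  set B := X.toList.filter (fun a => !decide (p a))
  have hperm : (A ++ B).Perm X.toList := List.filter_append_perm _ _
  have hAB : (A ++ B).toFinset = X := (List.toFinset_eq_of_perm _ _ hperm).trans X.toList_toFinset
  have hA : ∀ a ∈ A, a ∈ X ∧ p a := by simp [A]
  have hB : ∀ a ∈ B, a ∈ X ∧ ¬ p a := by simp [B]
  have hlen : (A.length : ℝ) + B.length = X.card := by
    rw [← Finset.length_toList, ← hperm.length_eq, List.length_append]; push_cast; ring
  have hA_len : ((A.length - 1 : ℕ) : ℝ) * W ≤ A.length * W := by gcongr; exact Nat.sub_le _ _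
  have hB_len : ((B.length - 1 : ℕ) : ℝ) * W ≤ B.length * W := by gcongr; exact Nat.sub_le _ _
  calc lopt dist X = lopt dist (A ++ B).toFinset := by rw [hAB]
    _ ≤ pathLen dist (A ++ B) := lopt_le_pathLen (hperm.nodup_iff.2 X.nodup_toList)
    _ ≤ pathLen dist A + D + pathLen dist B :=
        pathLen_append_le _ hD₀ A B fun a ha b hb => hD a (hA a ha).1 b (hB b hb).1
    _ ≤ (A.length - 1 : ℕ) * W + D + (B.length - 1 : ℕ) * W := by
        gcongr
        · exact pathLen_le_of_forall_le _ _ A fun a ha b hb =>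
            hW a (hA a ha).1 b (hA b hb).1 (iff_of_true (hA a ha).2 (hA b hb).2)
        · exact pathLen_le_of_forall_le _ _ B fun a ha b hb =>
            hW a (hB a ha).1 b (hB b hb).1 (iff_of_false (hB a ha).2 (hB b hb).2)
    _ ≤ D + X.card * W := by rw [← hlen]; linarith

variable {s : ℕ}

lemma finite_setOf_dist (y : Fin s → α) :
    {r : ℝ | ∃ i j : Fin s, r = dist (y i) (y j)}.Finite :=
  (Set.finite_range fun p : Fin s × Fin s => dist (y p.1) (y p.2)).subset <| by
    rintro _ ⟨i, j, rfl⟩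
    exact ⟨(i, j), rfl⟩

lemma dist_le_snakeDiam (y : Fin s → α) (i j : Fin s) : dist (y i) (y j) ≤ snakeDiam dist y :=
  le_csSup (finite_setOf_dist y).bddAbove ⟨i, j, rfl⟩

lemma dist_le_snakeWidth (y : Fin s → α) {i j : Fin s} (h : i.val % 2 = j.val % 2) :
    dist (y i) (y j) ≤ snakeWidth dist y :=
  le_csSup ((finite_setOf_dist y).subset <| by rintro _ ⟨i, j, -, rfl⟩; exact ⟨i, j, rfl⟩).bddAbove
    ⟨i, j, h, rfl⟩

variable [NeZero s]

lemma snakeWidth_le (y : Fin s → α) {W : ℝ}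
    (h : ∀ i j : Fin s, i.val % 2 = j.val % 2 → dist (y i) (y j) ≤ W) :
    snakeWidth dist y ≤ W :=
  csSup_le ⟨_, 0, 0, rfl, rfl⟩ fun _ ⟨i, j, hij, hr⟩ => hr ▸ h i j hij

lemma snakeWidth_nonneg (y : Fin s → α) : 0 ≤ snakeWidth dist y :=
  (dist_self (y 0)).symm.trans_le (dist_le_snakeWidth y rfl)

lemma exists_snakeDiam_eq_dist (y : Fin s → α) :
    ∃ i j : Fin s, snakeDiam dist y = dist (y i) (y j) :=
  Set.Nonempty.csSup_mem (by exact ⟨_, 0, 0, rfl⟩) (finite_setOf_dist y)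

/-- The diameter is realized by some pair, each point of which lies within the width of `y i`
or of `y j`. -/
lemma snakeDiam_sub_le_dist (y : Fin s → α) {W : ℝ} (hW : snakeWidth dist y ≤ W)
    {i j : Fin s} (hij : i.val % 2 ≠ j.val % 2) :
    snakeDiam dist y - 2 * W ≤ dist (y i) (y j) := by
  obtain ⟨i₀, j₀, hD⟩ := exists_snakeDiam_eq_dist y
  have hsame : ∀ a b : Fin s, a.val % 2 = b.val % 2 → dist (y a) (y b) ≤ W :=
    fun a b h => (dist_le_snakeWidth y h).trans hW
  have hW₀ : 0 ≤ W := (snakeWidth_nonneg y).trans hW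
  have hd := dist_nonneg (x := y i) (y := y j)
  rw [hD]
  rcases (by omega : i₀.val % 2 = i.val % 2 ∨ i₀.val % 2 = j.val % 2) with hi₀ | hi₀ <;>
    rcases (by omega : j₀.val % 2 = i.val % 2 ∨ j₀.val % 2 = j.val % 2) with hj₀ | hj₀
  · linarith [hsame i₀ j₀ (by omega)]
  · linarith [dist_triangle4 (y i₀) (y i) (y j) (y j₀), hsame i₀ i hi₀, hsame j j₀ hj₀.symm]
  · linarith [dist_triangle4 (y i₀) (y j) (y i) (y j₀), hsame i₀ j hi₀, hsame i j₀ hj₀.symm,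
      dist_comm (y i) (y j)]
  · linarith [hsame i₀ j₀ (by omega)]

lemma lopt_map_le {y : Fin s → α} (hy : Function.Injective y) {W : ℝ}
    (hW : snakeWidth dist y ≤ W) :
    lopt dist (Finset.univ.map ⟨y, hy⟩) ≤ snakeDiam dist y + s * W := by
  have hparity : ∀ i, (∃ j, y j = y i ∧ j.val % 2 = 0) ↔ i.val % 2 = 0 :=
    fun i => ⟨fun ⟨j, hj, h⟩ => hy hj ▸ h, fun h => ⟨i, rfl, h⟩⟩
  refine (lopt_le_of_two_clusters _ (fun a => ∃ j, y j = a ∧ j.val % 2 = 0)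
    ((snakeWidth_nonneg y).trans hW) (dist_nonneg.trans (dist_le_snakeDiam y 0 0)) ?_ ?_).trans_eq
    (by simp)
  · simp only [Finset.mem_map, Finset.mem_univ, true_and, Function.Embedding.coeFn_mk]
    rintro _ ⟨i, rfl⟩ _ ⟨j, rfl⟩ hij
    rw [hparity, hparity] at hij
    exact (dist_le_snakeWidth y (by omega)).trans hW
  · simp only [Finset.mem_map, Finset.mem_univ, true_and, Function.Embedding.coeFn_mk]
    rintro _ ⟨i, rfl⟩ _ ⟨j, rfl⟩
    exact dist_le_snakeDiam y i j

end Snakes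

section OrderRatioOfSnakes

variable {α : Type*} [MetricSpace α]

lemma mul_sub_le_lord_map (T : LinearOrder α) {k : ℕ} {y : Fin (k + 1) → α}
    (hy : IsSnake T y) {W : ℝ} (hW : snakeWidth dist y ≤ W) :
    k * (snakeDiam dist y - 2 * W) ≤ lord dist T (Finset.univ.map ⟨y, hy.injective⟩) := by
  have hX : Finset.univ.map ⟨y, hy.injective⟩ = (List.ofFn y).toFinset := by
    ext
    simp only [Finset.mem_map, Finset.mem_univ, true_and, Function.Embedding.coeFn_mk,
      List.mem_toFinset, List.mem_ofFn]
  rw [hX, lord_eq_pathLen T (List.pairwise_ofFn.2 hy), pathLen_ofFn]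
  calc (k : ℝ) * (snakeDiam dist y - 2 * W) = ∑ _i : Fin k, (snakeDiam dist y - 2 * W) := by
        rw [Finset.sum_const, Finset.card_univ, Fintype.card_fin, nsmul_eq_mul]
    _ ≤ _ := Finset.sum_le_sum fun i _ =>
        snakeDiam_sub_le_dist y hW (by simp only [Fin.val_castSucc, Fin.val_succ]; omega)

lemma snake_ratio_le_ORd (T : LinearOrder α) {k : ℕ} {y : Fin (k + 1) → α}
    (hy : IsSnake T y) {W : ℝ} (hW : snakeWidth dist y ≤ W) :
    k * (snakeDiam dist y - 2 * W) / (snakeDiam dist y + (k + 1 : ℕ) * W) ≤ ORd dist T k := by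
  rcases k.eq_zero_or_pos with rfl | hk
  · simpa using ORd_nonneg T 0
  set X := Finset.univ.map ⟨y, hy.injective⟩
  have hcard : X.card = k + 1 := by simp [X]
  calc _ ≤ lord dist T X / lopt dist X :=
        div_le_div₀ (lord_nonneg T X) (mul_sub_le_lord_map T hy hW) (lopt_pos (by omega))
          (lopt_map_le hy.injective hW)
    _ ≤ ORd dist T k := div_le_ORd T (by omega) hcard.le

lemma tendsto_mul_sub_div_add_atTop (c a b : ℝ) :
    Tendsto (fun D => c * (D - a) / (D + b)) atTop (𝓝 c) := by
  have h : Tendsto (fun D => c - c * (a + b) / (D + b)) atTop (𝓝 (c - 0)) :=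
    tendsto_const_nhds.sub
      (tendsto_const_nhds.div_atTop (tendsto_atTop_add_const_right _ b tendsto_id))
  rw [sub_zero] at h
  refine h.congr' ?_
  filter_upwards [eventually_gt_atTop (-b)] with D hD
  field_simp [show D + b ≠ 0 by linarith]
  ring

theorem ORd_eq_of_snakeSeqBddWidth (T : LinearOrder α) {k : ℕ}
    (h : SnakeSeqBddWidth dist T (k + 1)) : ORd dist T k = k := by
  obtain ⟨y, W, hy, hW, hD⟩ := h
  exact le_antisymm (ORd_le T k) <| le_of_tendsto' ((tendsto_mul_sub_div_add_atTop _ _ _).comp hD)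
    fun n => snake_ratio_le_ORd T (hy n) (hW n)

end OrderRatioOfSnakes

lemma snakeSeqBddWidth_of_eventually {α : Type*} {d : α → α → ℝ} {T : LinearOrder α} {s : ℕ}
    {x : ℕ → Fin s → α} {W : ℝ} (hx : ∀ᶠ n in atTop, IsSnake T (x n))
    (hW : ∀ n, snakeWidth d (x n) ≤ W) (hD : Tendsto (fun n => snakeDiam d (x n)) atTop atTop) :
    SnakeSeqBddWidth d T s := by
  obtain ⟨n₀, hn₀⟩ := eventually_atTop.1 hx
  exact ⟨fun n => x (n + n₀), W, fun n => hn₀ _ (Nat.le_add_left n₀ n), fun n => hW _,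
    (tendsto_add_atTop_iff_nat n₀).2 hD⟩

lemma IsSnake.comp_of_pullback {N M : Type*} {α : N → M} {s : ℕ} {TN : LinearOrder N}
    {TM : LinearOrder M} (hpull : ∀ x x' : N, TM.lt (α x) (α x') → TN.lt x x')
    {x : Fin (s + 1) → N} (hx : IsSnake TN x) (hne : ∀ i : Fin s, α (x i.castSucc) ≠ α (x i.succ)) :
    IsSnake TM (α ∘ x) := by
  let _ := TM
  have hle : ∀ i j, i < j → α (x i) ≤ α (x j) := fun i j hij =>
    not_lt.1 fun h => (hx i j hij).asymm (hpull _ _ h)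
  exact fun i j hij => Fin.strictMono_iff_lt_succ.2
    (fun i => (hle _ _ i.castSucc_lt_succ).lt_of_ne (hne i)) hij

section UniformEmbedding

variable {N M : Type*} [MetricSpace N] [MetricSpace M] {α : N → M} {ρ₁ ρ₂ : ℝ → ℝ} {s : ℕ}

lemma le_snakeDiam_comp [NeZero s] (hα : ∀ x y, ρ₁ (dist x y) ≤ dist (α x) (α y))
    (x : Fin s → N) : ρ₁ (snakeDiam dist x) ≤ snakeDiam dist (α ∘ x) := by
  obtain ⟨i, j, hij⟩ := exists_snakeDiam_eq_dist x
  exact hij ▸ (hα _ _).trans (dist_le_snakeDiam (α ∘ x) i j)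

lemma snakeWidth_comp_le [NeZero s] (hρ₂ : Monotone ρ₂)
    (hα : ∀ x y, dist (α x) (α y) ≤ ρ₂ (dist x y)) {x : Fin s → N} {W : ℝ}
    (hW : snakeWidth dist x ≤ W) : snakeWidth dist (α ∘ x) ≤ ρ₂ W :=
  snakeWidth_le _ fun _ _ hij => (hα _ _).trans (hρ₂ ((dist_le_snakeWidth x hij).trans hW))

lemma le_dist_comp_of_parity_ne [NeZero s] (hρ₁ : Monotone ρ₁)
    (hα : ∀ x y, ρ₁ (dist x y) ≤ dist (α x) (α y)) {x : Fin s → N} {W : ℝ}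
    (hW : snakeWidth dist x ≤ W) {i j : Fin s} (hij : i.val % 2 ≠ j.val % 2) :
    ρ₁ (snakeDiam dist x - 2 * W) ≤ dist (α (x i)) (α (x j)) :=
  (hρ₁ (snakeDiam_sub_le_dist x hW hij)).trans (hα _ _)

theorem SnakeSeqBddWidth.comp_of_unifEmb {TN : LinearOrder N} {TM : LinearOrder M}
    (hα : UnifEmb α) (hpull : ∀ x x' : N, TM.lt (α x) (α x') → TN.lt x x')
    (h : SnakeSeqBddWidth dist TN (s + 1)) : SnakeSeqBddWidth dist TM (s + 1) := by
  obtain ⟨x, W, hx, hW, hD⟩ := h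
  obtain ⟨ρ₁, ρ₂, hρ₁, hρ₂, hρ₁_top, hρ⟩ := hα
  have hsep : Tendsto (fun n => ρ₁ (snakeDiam dist (x n) - 2 * W)) atTop atTop :=
    hρ₁_top.comp (tendsto_atTop_add_const_right _ _ hD)
  refine snakeSeqBddWidth_of_eventually (x := fun n => α ∘ x n) ?_
    (fun n => snakeWidth_comp_le hρ₂ (fun _ _ => (hρ _ _).2) (hW n))
    (tendsto_atTop_mono (fun n => le_snakeDiam_comp (fun _ _ => (hρ _ _).1) (x n))
      (hρ₁_top.comp hD))
  filter_upwards [hsep.eventually_gt_atTop 0] with n hn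
  refine (hx n).comp_of_pullback hpull fun i => dist_pos.1 (hn.trans_le ?_)
  exact le_dist_comp_of_parity_ne hρ₁ (fun _ _ => (hρ _ _).1) (hW n)
    (by simp only [Fin.val_castSucc, Fin.val_succ]; omega)

end UniformEmbedding

theorem stmt4_general {N : Type*} {M : Type*} [MetricSpace N] [MetricSpace M]
    (α : N → M) (hα : UnifEmb α)
    (TM : LinearOrder M) (TN : LinearOrder N)
    (hpull : ∀ x x' : N, TM.lt (α x) (α x') → TN.lt x x')
    (k : ℕ)
    (h : SnakeSeqBddWidth (fun x y : N => dist x y) TN (k + 1)) :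
    SnakeSeqBddWidth (fun x y : M => dist x y) TM (k + 1) ∧
      ORd (fun x y : M => dist x y) TM k = (k : ℝ) := by
  have hM : SnakeSeqBddWidth dist TM (k + 1) := h.comp_of_unifEmb hα hpull
  exact ⟨hM, ORd_eq_of_snakeSeqBddWidth TM hM⟩

/-- If `α : N → M` is a uniform embedding, `T_N` a pullback of `T_M`, and `(N,T_N)` admits a
sequence of snakes of bounded width on `k+1` points, then so does `(M,T_M)`, and
`OR_{M,T_M}(k) = k`. -/
theorem stmt4 {N : Type*} {M : Type*} [MetricSpace N] [MetricSpace M]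
    (α : N → M) (hα : UnifEmb α)
    (TM : LinearOrder M) (TN : LinearOrder N)
    (hpull : ∀ x x' : N, TM.lt (α x) (α x') → TN.lt x x')
    (k : ℕ) (hk : 1 ≤ k)
    (h : SnakeSeqBddWidth (fun x y : N => dist x y) TN (k + 1)) :
    SnakeSeqBddWidth (fun x y : M => dist x y) TM (k + 1) ∧
      ORd (fun x y : M => dist x y) TM k = (k : ℝ) :=
  stmt4_general α hα TM TN hpull k h
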